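/- arXiv:2601.08944 — 4 statements merged into one kernel-verified Lean document; each statement's English description precedes it below -/
import Mathlib

section
/- The multi-ratio of 2m collinear-by-pairs points, when all points lie in a fixed affine chart, is independent of the choice of affine chart used to compute it; equivalently, for points given in homogeneous coordinates by nonzero vectors v_1, v_{12}, v_2, …, v_m, v_{m1} in C^{d+1} with each v_{i,i+1} a linear combination of v_i and v_{i+1}, the product ∏_i (p_i − p_{i,i+1})/(p_{i,i+1} − p_{i+1}) computed in any affine chart containing all the points takes the same value. -/
private lemma prod_r_eq {d m : ℕ} [NeZero m]
    (v w : Fin m → (Fin (d + 1) → ℂ))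
    (α β : Fin m → ℂ)
    (hw : ∀ i, w i = α i • v i + β i • v (i + 1))
    (φ : (Fin (d + 1) → ℂ) →ₗ[ℂ] ℂ)
    (hφv : ∀ i, φ (v i) ≠ 0) (hφw : ∀ i, φ (w i) ≠ 0)
    (r : Fin m → ℂ)
    (hrden : ∀ i, (φ (w i))⁻¹ • w i - (φ (v (i + 1)))⁻¹ • v (i + 1) ≠ 0)
    (hr : ∀ i, (φ (v i))⁻¹ • v i - (φ (w i))⁻¹ • w i
        = r i • ((φ (w i))⁻¹ • w i - (φ (v (i + 1)))⁻¹ • v (i + 1))) :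
    ∏ i, r i = (∏ i, β i) / (∏ i, α i) := by
  have key : ∀ i, r i = β i * φ (v (i + 1)) / (α i * φ (v i)) := by
    intro i
    have hA : φ (v i) ≠ 0 := hφv i
    have hB : φ (v (i + 1)) ≠ 0 := hφv (i + 1)
    have hW : φ (w i) ≠ 0 := hφw i
    have hWeq : φ (w i) = α i * φ (v i) + β i * φ (v (i + 1)) := by
      rw [hw i]; simp [smul_eq_mul]
    set X : Fin (d + 1) → ℂ := φ (v (i + 1)) • v i - φ (v i) • v (i + 1) with hX
    have c1 : (φ (w i) * φ (v (i + 1))) * (φ (w i))⁻¹ = φ (v (i + 1)) := by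
      field_simp
    have c2 : (φ (w i) * φ (v (i + 1))) * (φ (v (i + 1)))⁻¹ = φ (w i) := by
      field_simp
    have t1 : (φ (w i) * φ (v (i + 1))) •
        ((φ (w i))⁻¹ • w i - (φ (v (i + 1)))⁻¹ • v (i + 1))
        = φ (v (i + 1)) • w i - φ (w i) • v (i + 1) := by
      rw [smul_sub, smul_smul, smul_smul, c1, c2]
    have h1 : (φ (w i) * φ (v (i + 1))) •
        ((φ (w i))⁻¹ • w i - (φ (v (i + 1)))⁻¹ • v (i + 1)) = α i • X := by
      rw [t1, hWeq, hw i, hX]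
      module
    have hαX : α i • X ≠ 0 := by
      rw [← h1]
      exact smul_ne_zero (mul_ne_zero hW hB) (hrden i)
    have hα : α i ≠ 0 := by intro h; exact hαX (by simp [h])
    have hXne : X ≠ 0 := by intro h; exact hαX (by simp [h])
    have c3 : (φ (v i) * φ (w i) * φ (v (i + 1))) * (φ (v i))⁻¹
        = φ (w i) * φ (v (i + 1)) := by field_simp
    have c4 : (φ (v i) * φ (w i) * φ (v (i + 1))) * (φ (w i))⁻¹
        = φ (v i) * φ (v (i + 1)) := by field_simp
    have e1 : (φ (v i) * φ (w i) * φ (v (i + 1))) •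
        ((φ (v i))⁻¹ • v i - (φ (w i))⁻¹ • w i) = (β i * φ (v (i + 1))) • X := by
      rw [smul_sub, smul_smul, smul_smul, c3, c4, hWeq, hw i, hX]
      module
    have t3 : (φ (v i) * φ (w i) * φ (v (i + 1))) •
        ((φ (w i))⁻¹ • w i - (φ (v (i + 1)))⁻¹ • v (i + 1))
        = (α i * φ (v i)) • X := by
      rw [mul_assoc, mul_smul, h1, smul_smul, mul_comm]
    have e2 : (φ (v i) * φ (w i) * φ (v (i + 1))) •
        (r i • ((φ (w i))⁻¹ • w i - (φ (v (i + 1)))⁻¹ • v (i + 1)))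
        = (r i * (α i * φ (v i))) • X := by
      rw [smul_comm, t3, smul_smul]
    have h2 : (β i * φ (v (i + 1))) • X = (r i * (α i * φ (v i))) • X := by
      rw [← e1, ← e2, hr i]
    have h3 : β i * φ (v (i + 1)) = r i * (α i * φ (v i)) := by
      have h4 := sub_eq_zero.mpr h2
      rw [← sub_smul] at h4
      rcases smul_eq_zero.mp h4 with h | h
      · exact sub_eq_zero.mp h
      · exact absurd h hXne
    rw [eq_div_iff (mul_ne_zero hα hA)]
    linear_combination -h3
  have hPv : (∏ i, φ (v i)) ≠ 0 := Finset.prod_ne_zero_iff.mpr fun i _ => hφv i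
  have hshift : (∏ i, φ (v (i + 1))) = ∏ i, φ (v i) :=
    Fintype.prod_equiv (Equiv.addRight 1) _ _ (fun i => rfl)
  calc ∏ i, r i = ∏ i, β i * φ (v (i + 1)) / (α i * φ (v i)) :=
        Finset.prod_congr rfl fun i _ => key i
    _ = ((∏ i, β i) * ∏ i, φ (v (i + 1))) / ((∏ i, α i) * ∏ i, φ (v i)) := by
        rw [Finset.prod_div_distrib, Finset.prod_mul_distrib, Finset.prod_mul_distrib]
    _ = (∏ i, β i) / (∏ i, α i) := by
        rw [hshift, mul_div_mul_right _ _ hPv]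

/-- Chart-independence of the multi-ratio. Points are given by nonzero
homogeneous coordinate vectors `v i` and `w i` with each `w i` (the point
`p_{i,i+1}`) a linear combination of `v i` and `v (i+1)`. An affine chart is
encoded by a linear functional `φ` (the hyperplane at infinity is its kernel),
the chart image of `[x]` being `(φ x)⁻¹ • x`. If `r i` (resp. `s i`) are the
directed ratio scalars `(p_i − p_{i,i+1}) = r i • (p_{i,i+1} − p_{i+1})` in the
chart `φ` (resp. `ψ`), then `∏ r = ∏ s`. -/
theorem multi_ratio_chart_independent (d m : ℕ) [NeZero m]
    (v w : Fin m → (Fin (d + 1) → ℂ))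
    (α β : Fin m → ℂ)
    (hw : ∀ i, w i = α i • v i + β i • v (i + 1))
    (φ ψ : (Fin (d + 1) → ℂ) →ₗ[ℂ] ℂ)
    (hφv : ∀ i, φ (v i) ≠ 0) (hφw : ∀ i, φ (w i) ≠ 0)
    (hψv : ∀ i, ψ (v i) ≠ 0) (hψw : ∀ i, ψ (w i) ≠ 0)
    (r s : Fin m → ℂ)
    (hrden : ∀ i, (φ (w i))⁻¹ • w i - (φ (v (i + 1)))⁻¹ • v (i + 1) ≠ 0)
    (hsden : ∀ i, (ψ (w i))⁻¹ • w i - (ψ (v (i + 1)))⁻¹ • v (i + 1) ≠ 0)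
    (hr : ∀ i, (φ (v i))⁻¹ • v i - (φ (w i))⁻¹ • w i
        = r i • ((φ (w i))⁻¹ • w i - (φ (v (i + 1)))⁻¹ • v (i + 1)))
    (hs : ∀ i, (ψ (v i))⁻¹ • v i - (ψ (w i))⁻¹ • w i
        = s i • ((ψ (w i))⁻¹ • w i - (ψ (v (i + 1)))⁻¹ • v (i + 1))) :
    ∏ i, r i = ∏ i, s i := by
  rw [prod_r_eq v w α β hw φ hφv hφw r hrden hr,
      prod_r_eq v w α β hw ψ hψv hψw s hsden hs]
end

section
/- The multi-ratio is invariant under central projection: if π_U is the central projection from a projective subspace U of CP^d onto a complementary subspace V, and U does not meet any of the lines p_i p_{i+1}, then mr(π_U(p_1), π_U(p_{1,2}), …, π_U(p_{m,1})) = mr(p_1, p_{1,2}, …, p_{m,1}). -/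
/-! In a chart `f`, the normalized point of `w = a • x + b • y` divides the segment from the
normalized `x` to the normalized `y` in the ratio `b f(y) : a f(x)`. The projected points are
`π w = a • π x + b • π y` with the same coefficients, so every ratio changes only by the
chart factor `f(y)/f(x)`, and around the closed polygon these factors cancel. -/

theorem LinearMap.chart_ratio_eq {K V : Type*} [Field K] [AddCommGroup V] [Module K V]
    (f : V →ₗ[K] K) {x y w : V} {a b r : K} (hw : w = a • x + b • y)
    (hfx : f x ≠ 0) (hfy : f y ≠ 0) (hfw : f w ≠ 0)
    (hden : (f w)⁻¹ • w - (f y)⁻¹ • y ≠ 0)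
    (hr : (f x)⁻¹ • x - (f w)⁻¹ • w = r • ((f w)⁻¹ • w - (f y)⁻¹ • y)) :
    r = b * f y / (a * f x) := by
  have hfw_eq : f w = a * f x + b * f y := by simp [hw]
  rw [hfw_eq] at hfw hden hr
  subst hw
  have ha : a ≠ 0 := by
    -- for `a = 0` the normalized `w` is the normalized `y`
    rintro rfl
    exact hden (by match_scalars <;> field_simp <;> ring)
  have hratio : (f x)⁻¹ • x - (a * f x + b * f y)⁻¹ • (a • x + b • y)
      = (b * f y / (a * f x)) • ((a * f x + b * f y)⁻¹ • (a • x + b • y) - (f y)⁻¹ • y) := by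
    have hfw' : f x * a + b * f y ≠ 0 := by rwa [mul_comm]
    match_scalars <;> field_simp <;> ring
  exact smul_left_injective K hden (hr.symm.trans hratio)

theorem prod_mul_comp_perm_div_mul {ι K : Type*} [Fintype ι] [CommGroupWithZero K] (σ : Equiv.Perm ι)
    (a b c : ι → K) (hc : ∀ i, c i ≠ 0) :
    ∏ i, b i * c (σ i) / (a i * c i) = ∏ i, b i / a i := by
  rw [Finset.prod_div_distrib, Finset.prod_div_distrib, Finset.prod_mul_distrib,
    Finset.prod_mul_distrib, Equiv.prod_comp σ c,
    mul_div_mul_right _ _ (Finset.prod_ne_zero_iff.mpr fun i _ => hc i)]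

theorem multi_ratio_central_projection_invariant_general (d rk m : ℕ) [NeZero m]
    (v w : Fin m → (Fin (d + 1) → ℂ))
    (α β : Fin m → ℂ)
    (hw : ∀ i, w i = α i • v i + β i • v (i + 1))
    (π : (Fin (d + 1) → ℂ) →ₗ[ℂ] (Fin (rk + 1) → ℂ))
    (φ : (Fin (d + 1) → ℂ) →ₗ[ℂ] ℂ) (ψ : (Fin (rk + 1) → ℂ) →ₗ[ℂ] ℂ)
    (hφv : ∀ i, φ (v i) ≠ 0) (hφw : ∀ i, φ (w i) ≠ 0)
    (hψv : ∀ i, ψ (π (v i)) ≠ 0) (hψw : ∀ i, ψ (π (w i)) ≠ 0)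
    (r s : Fin m → ℂ)
    (hrden : ∀ i, (φ (w i))⁻¹ • w i - (φ (v (i + 1)))⁻¹ • v (i + 1) ≠ 0)
    (hsden : ∀ i, (ψ (π (w i)))⁻¹ • π (w i)
        - (ψ (π (v (i + 1))))⁻¹ • π (v (i + 1)) ≠ 0)
    (hr : ∀ i, (φ (v i))⁻¹ • v i - (φ (w i))⁻¹ • w i
        = r i • ((φ (w i))⁻¹ • w i - (φ (v (i + 1)))⁻¹ • v (i + 1)))
    (hs : ∀ i, (ψ (π (v i)))⁻¹ • π (v i) - (ψ (π (w i)))⁻¹ • π (w i)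
        = s i • ((ψ (π (w i)))⁻¹ • π (w i)
            - (ψ (π (v (i + 1))))⁻¹ • π (v (i + 1)))) :
    ∏ i, r i = ∏ i, s i := by
  have hr_eq (i : Fin m) : r i = β i * φ (v (i + 1)) / (α i * φ (v i)) :=
    φ.chart_ratio_eq (hw i) (hφv i) (hφv (i + 1)) (hφw i) (hrden i) (hr i)
  have hs_eq (i : Fin m) : s i = β i * ψ (π (v (i + 1))) / (α i * ψ (π (v i))) :=
    ψ.chart_ratio_eq (by simp [hw i]) (hψv i) (hψv (i + 1)) (hψw i) (hsden i) (hs i)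
  simp only [hr_eq, hs_eq]
  exact (prod_mul_comp_perm_div_mul (Equiv.addRight 1) α β _ hφv).trans
    (prod_mul_comp_perm_div_mul (Equiv.addRight 1) α β _ hψv).symm

/-- Invariance of the multi-ratio under central projection. The central
projection is, in homogeneous coordinates, a linear surjection
`π : ℂ^{d+1} → ℂ^{r+1}`; the condition that the center misses each line
`p_i p_{i+1}` says `π` is injective on `span{v i, v (i+1)}`. If `r i` are the
directed ratio scalars of the original points in a chart `φ` and `s i` those
of the projected points in a chart `ψ`, then `∏ r = ∏ s`. -/
theorem multi_ratio_central_projection_invariant (d rk m : ℕ) [NeZero m]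
    (v w : Fin m → (Fin (d + 1) → ℂ))
    (α β : Fin m → ℂ)
    (hw : ∀ i, w i = α i • v i + β i • v (i + 1))
    (π : (Fin (d + 1) → ℂ) →ₗ[ℂ] (Fin (rk + 1) → ℂ))
    (hcenter : ∀ i, ∀ x ∈ Submodule.span ℂ ({v i, v (i + 1)} : Set (Fin (d + 1) → ℂ)),
        π x = 0 → x = 0)
    (φ : (Fin (d + 1) → ℂ) →ₗ[ℂ] ℂ) (ψ : (Fin (rk + 1) → ℂ) →ₗ[ℂ] ℂ)
    (hφv : ∀ i, φ (v i) ≠ 0) (hφw : ∀ i, φ (w i) ≠ 0)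
    (hψv : ∀ i, ψ (π (v i)) ≠ 0) (hψw : ∀ i, ψ (π (w i)) ≠ 0)
    (r s : Fin m → ℂ)
    (hrden : ∀ i, (φ (w i))⁻¹ • w i - (φ (v (i + 1)))⁻¹ • v (i + 1) ≠ 0)
    (hsden : ∀ i, (ψ (π (w i)))⁻¹ • π (w i)
        - (ψ (π (v (i + 1))))⁻¹ • π (v (i + 1)) ≠ 0)
    (hr : ∀ i, (φ (v i))⁻¹ • v i - (φ (w i))⁻¹ • w i
        = r i • ((φ (w i))⁻¹ • w i - (φ (v (i + 1)))⁻¹ • v (i + 1)))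
    (hs : ∀ i, (ψ (π (v i)))⁻¹ • π (v i) - (ψ (π (w i)))⁻¹ • π (w i)
        = s i • ((ψ (π (w i)))⁻¹ • π (w i)
            - (ψ (π (v (i + 1))))⁻¹ • π (v (i + 1)))) :
    ∏ i, r i = ∏ i, s i :=
  multi_ratio_central_projection_invariant_general d rk m v w α β hw π φ ψ hφv hφw hψv hψw r s hrden
    hsden hr hs
end

section
/- (Resplit multi-ratio / dSKP relation) Let v0, v1, v2, v3, v4, ṽ0 be nonzero vectors in C^{d+1} and a, b, c, d ∈ C* such that v0 = −a·v1 − b·v2 = c·v3 + d·v4 and ṽ0 = a·v1 + d·v4 = −b·v2 − c·v3, with the six projectivized points pairwise distinct along the relevant lines. Then in any affine chart containing all six points, mr([v1],[v0],[v2],[v3],[ṽ0],[v4]) = ∏ of the six directed ratios equals −1. -/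
/-!
Write `p x = (φ x)⁻¹ • x` for the chart image of `[x]`. A linear relation `α x + β w + γ y = 0`
becomes `m_x p x + m_w p w + m_y p y = 0` with masses `m_• = α φ x, …` summing to zero, so the
chart points are collinear and `p x - p w = (m_y / m_x) (p w - p y)`. The relations
`v0 + a v1 + b v2 = 0`, `b v2 + c v3 + ṽ0 = 0` and `-ṽ0 + e v4 + a v1 = 0` thus give the three
directed ratios `b φ v2 / (a φ v1)`, `φ ṽ0 / (b φ v2)` and `-a φ v1 / φ ṽ0`, whose product
telescopes to `-1`.
-/

namespace AffineChart

variable {K V : Type*} [Field K] [AddCommGroup V] [Module K V] (φ : V →ₗ[K] K)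

def point (v : V) : V := (φ v)⁻¹ • v

variable {φ}

theorem smul_point {v : V} (hv : φ v ≠ 0) : φ v • point φ v = v :=
  smul_inv_smul₀ hv v

theorem smul_sub_point_eq_smul_sub_point {α β γ : K} {x w y : V}
    (hx : φ x ≠ 0) (hw : φ w ≠ 0) (hy : φ y ≠ 0) (hrel : α • x + β • w + γ • y = 0) :
    (α * φ x) • (point φ x - point φ w) = (γ * φ y) • (point φ w - point φ y) := by
  have hmass : α * φ x + β * φ w + γ * φ y = 0 := by
    simpa [smul_eq_mul] using congrArg φ hrel
  have hpoints : (α * φ x) • point φ x + (β * φ w) • point φ w + (γ * φ y) • point φ y = 0 := by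
    simpa only [mul_smul, smul_point hx, smul_point hw, smul_point hy] using hrel
  have hβ : β * φ w = -(α * φ x) - γ * φ y := by linear_combination hmass
  rw [hβ] at hpoints
  linear_combination (norm := module) hpoints

theorem ratio_eq_of_linear_relation {α β γ r : K} {x w y : V}
    (hα : α ≠ 0) (hx : φ x ≠ 0) (hw : φ w ≠ 0) (hy : φ y ≠ 0)
    (hrel : α • x + β • w + γ • y = 0) (hwy : point φ w - point φ y ≠ 0)
    (hr : point φ x - point φ w = r • (point φ w - point φ y)) :
    r = γ * φ y / (α * φ x) := by
  have hmx : α * φ x ≠ 0 := mul_ne_zero hα hx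
  rw [eq_div_iff hmx]
  refine smul_left_injective K hwy ?_
  dsimp only
  rw [mul_comm, mul_smul, ← hr]
  exact smul_sub_point_eq_smul_sub_point hx hw hy hrel

end AffineChart

open AffineChart in
theorem resplit_dSKP_multi_ratio_general (d : ℕ)
    (v0 v1 v2 v3 v4 vt0 : Fin (d + 1) → ℂ)
    (a b c e : ℂ) (ha : a ≠ 0) (hb : b ≠ 0)
    (h1 : v0 = -(a • v1) - b • v2)
    (h3 : vt0 = a • v1 + e • v4) (h4 : vt0 = -(b • v2) - c • v3)
    (φ : (Fin (d + 1) → ℂ) →ₗ[ℂ] ℂ)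
    (hφ : ∀ x ∈ ({v0, v1, v2, v3, v4, vt0} : Set (Fin (d + 1) → ℂ)), φ x ≠ 0)
    (r1 r2 r3 : ℂ)
    (hden1 : (φ v0)⁻¹ • v0 - (φ v2)⁻¹ • v2 ≠ 0)
    (hden2 : (φ v3)⁻¹ • v3 - (φ vt0)⁻¹ • vt0 ≠ 0)
    (hden3 : (φ v4)⁻¹ • v4 - (φ v1)⁻¹ • v1 ≠ 0)
    (hr1 : (φ v1)⁻¹ • v1 - (φ v0)⁻¹ • v0 = r1 • ((φ v0)⁻¹ • v0 - (φ v2)⁻¹ • v2))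
    (hr2 : (φ v2)⁻¹ • v2 - (φ v3)⁻¹ • v3 = r2 • ((φ v3)⁻¹ • v3 - (φ vt0)⁻¹ • vt0))
    (hr3 : (φ vt0)⁻¹ • vt0 - (φ v4)⁻¹ • v4 = r3 • ((φ v4)⁻¹ • v4 - (φ v1)⁻¹ • v1)) :
    r1 * r2 * r3 = -1 := by
  have hφ0 : φ v0 ≠ 0 := hφ _ (by simp)
  have hφ1 : φ v1 ≠ 0 := hφ _ (by simp)
  have hφ2 : φ v2 ≠ 0 := hφ _ (by simp)
  have hφ3 : φ v3 ≠ 0 := hφ _ (by simp)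
  have hφ4 : φ v4 ≠ 0 := hφ _ (by simp)
  have hφt : φ vt0 ≠ 0 := hφ _ (by simp)
  have hr1' : r1 = b * φ v2 / (a * φ v1) :=
    ratio_eq_of_linear_relation (β := 1) ha hφ1 hφ0 hφ2 (by rw [h1]; module) hden1 hr1
  have hr2' : r2 = 1 * φ vt0 / (b * φ v2) :=
    ratio_eq_of_linear_relation (β := c) hb hφ2 hφ3 hφt (by rw [h4]; module) hden2 hr2
  have hr3' : r3 = a * φ v1 / (-1 * φ vt0) :=
    ratio_eq_of_linear_relation (β := e) (neg_ne_zero.mpr one_ne_zero) hφt hφ4 hφ1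
      (by rw [h3]; module) hden3 hr3
  rw [hr1', hr2', hr3']
  field_simp

/-- Resplit multi-ratio / dSKP relation. With vector relations
`v0 = −a v1 − b v2 = c v3 + e v4` and `ṽ0 = a v1 + e v4 = −b v2 − c v3`
(`a,b,c,e ∈ ℂ*`), the multi-ratio `mr([v1],[v0],[v2],[v3],[ṽ0],[v4])`
computed in any affine chart (given by a functional `φ` not vanishing on the
six points; chart image of `[x]` is `(φ x)⁻¹ • x`) equals `−1`. The three
directed ratio scalars `r1, r2, r3` of the multi-ratio are characterized by
the chart equations below. -/
theorem resplit_dSKP_multi_ratio (d : ℕ)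
    (v0 v1 v2 v3 v4 vt0 : Fin (d + 1) → ℂ)
    (a b c e : ℂ) (ha : a ≠ 0) (hb : b ≠ 0) (hc : c ≠ 0) (he : e ≠ 0)
    (h1 : v0 = -(a • v1) - b • v2) (h2 : v0 = c • v3 + e • v4)
    (h3 : vt0 = a • v1 + e • v4) (h4 : vt0 = -(b • v2) - c • v3)
    (φ : (Fin (d + 1) → ℂ) →ₗ[ℂ] ℂ)
    (hφ : ∀ x ∈ ({v0, v1, v2, v3, v4, vt0} : Set (Fin (d + 1) → ℂ)), φ x ≠ 0)
    (r1 r2 r3 : ℂ)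
    (hden1 : (φ v0)⁻¹ • v0 - (φ v2)⁻¹ • v2 ≠ 0)
    (hden2 : (φ v3)⁻¹ • v3 - (φ vt0)⁻¹ • vt0 ≠ 0)
    (hden3 : (φ v4)⁻¹ • v4 - (φ v1)⁻¹ • v1 ≠ 0)
    (hr1 : (φ v1)⁻¹ • v1 - (φ v0)⁻¹ • v0 = r1 • ((φ v0)⁻¹ • v0 - (φ v2)⁻¹ • v2))
    (hr2 : (φ v2)⁻¹ • v2 - (φ v3)⁻¹ • v3 = r2 • ((φ v3)⁻¹ • v3 - (φ vt0)⁻¹ • vt0))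
    (hr3 : (φ vt0)⁻¹ • vt0 - (φ v4)⁻¹ • v4 = r3 • ((φ v4)⁻¹ • v4 - (φ v1)⁻¹ • v1)) :
    r1 * r2 * r3 = -1 :=
  resplit_dSKP_multi_ratio_general d v0 v1 v2 v3 v4 vt0 a b c e ha hb h1 h3 h4 φ hφ r1 r2 r3 hden1
    hden2 hden3 hr1 hr2 hr3
end

section
/- (Elementary 5-cycle consistency via Desargues, algebraic core) Let T(123), T(125), T(135), T(145), T(235), T(345) and T(234) be seven points in CP^3 in the incidence configuration of the initial TCD of the 5-cycle (each triple sharing two indices collinear as prescribed). Define T(245) := line(T(125),T(235)) ∩ line(T(145),T(345)), then T(124) := line(T(123),T(125)) ∩ line(T(234),T(245)), then T(134) := line(T(124),T(145)) ∩ line(T(234),T(345)). Alternatively define X := line(T(123),T(135)) ∩ line(T(234),T(345)) and Y := line(T(123),T(125)) ∩ line(T(145),X). Then X = T(134) and Y = T(124), i.e., the two propagation orders agree. -/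
private lemma collinear_extract {a b c : Fin 3 → ℂ}
    (h : Collinear ℂ ({a, b, c} : Set (Fin 3 → ℂ))) (hab : a ≠ b) :
    ∃ r : ℂ, c = a + r • (b - a) := by
  have hc : c ∈ line[ℂ, a, b] :=
    h.mem_affineSpan_of_mem_of_ne (Set.mem_insert _ _) (by simp) (by simp) hab
  have h2 : (c - a) +ᵥ a ∈ line[ℂ, a, b] := by
    simpa [vadd_eq_add, sub_add_cancel] using hc
  rw [vadd_left_mem_affineSpan_pair] at h2
  obtain ⟨r, hr⟩ := h2
  have : r • (b - a) = c - a := by simpa [vsub_eq_sub] using hr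
  exact ⟨r, by rw [this]; abel⟩


private lemma collinear_extract_mid {a b c : Fin 3 → ℂ}
    (h : Collinear ℂ ({a, b, c} : Set (Fin 3 → ℂ))) (hac : a ≠ c) :
    ∃ r : ℂ, b = a + r • (c - a) := by
  have h' : Collinear ℂ ({a, c, b} : Set (Fin 3 → ℂ)) := by
    have : ({a, c, b} : Set (Fin 3 → ℂ)) = {a, b, c} := by
      ext x; simp; tauto
    rwa [this]
  exact collinear_extract h' hac

private lemma coeff_zero {u w z : Fin 3 → ℂ}
    (h : LinearIndependent ℂ ![u, w, z]) {a b c : ℂ}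
    (heq : a • u + b • w + c • z = 0) : a = 0 ∧ b = 0 ∧ c = 0 := by
  have h2 := Fintype.linearIndependent_iff.mp h ![a, b, c]
    (by simpa [Fin.sum_univ_three] using heq)
  exact ⟨h2 0, h2 1, h2 2⟩

set_option maxHeartbeats 1000000


/-- Elementary 5-cycle consistency via Desargues. Seven points of `ℂ³` (an
affine chart of `ℂP³`), labeled by 3-element subsets of `{1,…,5}`, satisfy
the incidences of the initial TCD of the 5-cycle. New points are constructed
as intersections of lines in two different orders:
`T245 = L(25) ∩ L(45)`, `T124 = L(12) ∩ L(24)`, `T134 = L(14) ∩ L(34)`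
versus `X = L(13) ∩ L(34)`, `Y = L(12) ∩ L(14 through X)`. Under the stated
genericity assumptions the two propagation orders agree: `X = T134` and
`Y = T124`. -/
theorem five_cycle_consistency_desargues
    (T123 T125 T135 T145 T235 T345 T234 T245 T124 T134 X Y : Fin 3 → ℂ)
    -- pairwise distinctness of the initial seven points
    (hdist : List.Pairwise (· ≠ ·)
        [T123, T125, T135, T145, T235, T345, T234])
    -- incidences of the initial configuration
    (h15 : Collinear ℂ ({T125, T135, T145} : Set (Fin 3 → ℂ)))
    (h35 : Collinear ℂ ({T135, T235, T345} : Set (Fin 3 → ℂ)))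
    (h23 : Collinear ℂ ({T123, T235, T234} : Set (Fin 3 → ℂ)))
    -- genericity: maximal rank and distinctness of the lines being intersected
    (hspan : affineSpan ℂ
        ({T123, T125, T135, T145, T235, T345, T234} : Set (Fin 3 → ℂ)) = ⊤)
    (hg1 : ¬ Collinear ℂ ({T125, T235, T145} : Set (Fin 3 → ℂ)))
    (hg2 : ¬ Collinear ℂ ({T123, T125, T234} : Set (Fin 3 → ℂ)))
    (hg3 : ¬ Collinear ℂ ({T124, T145, T234} : Set (Fin 3 → ℂ)))
    (hg4 : ¬ Collinear ℂ ({T123, T135, T234} : Set (Fin 3 → ℂ)))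
    (hg5 : ¬ Collinear ℂ ({T123, T125, T145} : Set (Fin 3 → ℂ)))
    -- first propagation order
    (h245a : Collinear ℂ ({T125, T235, T245} : Set (Fin 3 → ℂ)))
    (h245b : Collinear ℂ ({T145, T345, T245} : Set (Fin 3 → ℂ)))
    (h124a : Collinear ℂ ({T123, T125, T124} : Set (Fin 3 → ℂ)))
    (h124b : Collinear ℂ ({T234, T245, T124} : Set (Fin 3 → ℂ)))
    (h134a : Collinear ℂ ({T124, T145, T134} : Set (Fin 3 → ℂ)))
    (h134b : Collinear ℂ ({T234, T345, T134} : Set (Fin 3 → ℂ)))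
    -- second propagation order
    (hXa : Collinear ℂ ({T123, T135, X} : Set (Fin 3 → ℂ)))
    (hXb : Collinear ℂ ({T234, T345, X} : Set (Fin 3 → ℂ)))
    (hYa : Collinear ℂ ({T123, T125, Y} : Set (Fin 3 → ℂ)))
    (hYb : Collinear ℂ ({T145, X, Y} : Set (Fin 3 → ℂ))) :
    X = T134 ∧ Y = T124 := by
  -- distinctness facts
  simp only [List.pairwise_cons, List.mem_cons, List.mem_singleton, List.not_mem_nil] at hdist
  obtain ⟨h1, h2, h3, h4, h5, h6⟩ := hdist
  have d1 : T125 ≠ T145 := h2 _ (by tauto)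
  have d2 : T135 ≠ T235 := h3 _ (by tauto)
  have d3 : T123 ≠ T235 := h1 _ (by tauto)
  have d4 : T125 ≠ T235 := h2 _ (by tauto)
  have d5 : T145 ≠ T345 := h4 _ (by tauto)
  have d6 : T123 ≠ T125 := h1 _ (by tauto)
  have d7 : T234 ≠ T345 := (h6.1 _ (by tauto)).symm
  have d8 : T123 ≠ T135 := h1 _ (by tauto)
  have d9 : T123 ≠ T234 := h1 _ (by tauto)
  have d10 : T235 ≠ T234 := h5 _ (by tauto)
  have d11 : T135 ≠ T145 := h3 _ (by tauto)
  -- scalar extractions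
  obtain ⟨s1, hs1⟩ := collinear_extract_mid h15 d1
  obtain ⟨s2, hs2⟩ := collinear_extract h35 d2
  obtain ⟨s3, hs3⟩ := collinear_extract h23 d3
  obtain ⟨s4, hs4⟩ := collinear_extract h245a d4
  obtain ⟨s5, hs5⟩ := collinear_extract h245b d5
  obtain ⟨s6, hs6⟩ := collinear_extract h124a d6
  obtain ⟨s9, hs9⟩ := collinear_extract h134b d7
  obtain ⟨t1, ht1⟩ := collinear_extract hXa d8
  obtain ⟨t2, ht2⟩ := collinear_extract hXb d7
  obtain ⟨t3, ht3⟩ := collinear_extract hYa d6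
  -- basis vectors
  set u : Fin 3 → ℂ := T125 - T123 with hu
  set w : Fin 3 → ℂ := T145 - T123 with hw
  set z : Fin 3 → ℂ := T235 - T123 with hz
  have hu' : T125 = T123 + u := by rw [hu]; abel
  have hw' : T145 = T123 + w := by rw [hw]; abel
  have hz' : T235 = T123 + z := by rw [hz]; abel
  -- expressions for the other initial points
  have hv : T135 = T123 + ((1 - s1) • u + s1 • w) := by
    rw [hs1, hu', hw']; module
  have hf : T345 = T123 + (((1-s2)*(1-s1)) • u + ((1-s2)*s1) • w + s2 • z) := by
    rw [hs2, hv, hz']; module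
  have hgg : T234 = T123 + s3 • z := by
    exact hs3
  -- span of u, w, z is everything
  have hWtop : Submodule.span ℂ ({u, w, z} : Set (Fin 3 → ℂ)) = ⊤ := by
    set W := Submodule.span ℂ ({u, w, z} : Set (Fin 3 → ℂ)) with hWdef
    have hmu : u ∈ W := Submodule.subset_span (by simp)
    have hmw : w ∈ W := Submodule.subset_span (by simp)
    have hmz : z ∈ W := Submodule.subset_span (by simp)
    have hle : affineSpan ℂ ({T123, T125, T135, T145, T235, T345, T234} : Set (Fin 3 → ℂ))
        ≤ AffineSubspace.mk' T123 W := by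
      rw [affineSpan_le]
      intro p hp
      simp only [Set.mem_insert_iff, Set.mem_singleton_iff] at hp
      have mem_of : ∀ q : Fin 3 → ℂ, q - T123 ∈ W → q ∈ (AffineSubspace.mk' T123 W : Set (Fin 3 → ℂ)) := by
        intro q hq
        have : (q - T123) +ᵥ T123 ∈ AffineSubspace.mk' T123 W := AffineSubspace.vadd_mem_mk' _ hq
        simpa [vadd_eq_add, sub_add_cancel] using this
      rcases hp with rfl | rfl | rfl | rfl | rfl | rfl | rfl
      · exact mem_of _ (by simp [sub_self, Submodule.zero_mem])
      · exact mem_of _ (by rw [hu']; simpa using hmu)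
      · refine mem_of _ ?_
        rw [hv]
        have : T123 + ((1 - s1) • u + s1 • w) - T123 = (1 - s1) • u + s1 • w := by abel
        rw [this]
        exact W.add_mem (W.smul_mem _ hmu) (W.smul_mem _ hmw)
      · exact mem_of _ (by rw [hw']; simpa using hmw)
      · exact mem_of _ (by rw [hz']; simpa using hmz)
      · refine mem_of _ ?_
        rw [hf]
        have : T123 + (((1-s2)*(1-s1)) • u + ((1-s2)*s1) • w + s2 • z) - T123
            = ((1-s2)*(1-s1)) • u + ((1-s2)*s1) • w + s2 • z := by abel
        rw [this]
        exact W.add_mem (W.add_mem (W.smul_mem _ hmu) (W.smul_mem _ hmw)) (W.smul_mem _ hmz)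
      · refine mem_of _ ?_
        rw [hgg]
        have : T123 + s3 • z - T123 = s3 • z := by abel
        rw [this]
        exact W.smul_mem _ hmz
    rw [hspan] at hle
    have htop : AffineSubspace.mk' T123 W = ⊤ := top_le_iff.mp hle
    have := congrArg AffineSubspace.direction htop
    rwa [AffineSubspace.direction_mk', AffineSubspace.direction_top] at this
  have hind : LinearIndependent ℂ ![u, w, z] := by
    apply linearIndependent_of_top_le_span_of_card_eq_finrank
    · rw [show Set.range ![u, w, z] = ({u, w, z} : Set (Fin 3 → ℂ)) by
        ext x; simp [Fin.exists_fin_succ, Matrix.cons_val_zero, Matrix.cons_val_one]; tauto]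
      rw [hWtop]
    · simp
  -- representations of constructed points
  have hq1 : T245 = T123 + ((1-s4) • u + (0:ℂ) • w + s4 • z) := by
    rw [hs4, hu', hz']; module
  have hm : T124 = T123 + (s6 • u + (0:ℂ) • w + (0:ℂ) • z) := by
    rw [hs6]; module
  have hn2 : T134 = T123 + ((s9*((1-s2)*(1-s1))) • u + (s9*((1-s2)*s1)) • w
      + (s3 + s9*(s2-s3)) • z) := by
    rw [hs9, hf, hgg]; module
  have hx1 : X = T123 + ((t1*(1-s1)) • u + (t1*s1) • w + (0:ℂ) • z) := by
    rw [ht1, hv]; module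
  have hx2 : X = T123 + ((t2*((1-s2)*(1-s1))) • u + (t2*((1-s2)*s1)) • w
      + (s3 + t2*(s2-s3)) • z) := by
    rw [ht2, hf, hgg]; module
  have hy1 : Y = T123 + (t3 • u + (0:ℂ) • w + (0:ℂ) • z) := by
    rw [ht3]; module
  -- s3 ≠ 0
  have hs3ne : s3 ≠ 0 := by
    intro hc
    exact d9 (by rw [hgg, hc]; module)
  -- T124 ≠ T145
  have hne1 : T124 ≠ T145 := by
    intro hc
    have h0 : (s6 - 0) • u + ((0:ℂ) - 1) • w + ((0:ℂ) - 0) • z = 0 := by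
      have := (hm.symm.trans (hc.trans hw'))
      linear_combination (norm := module) this
    have := (coeff_zero hind h0).2.1; norm_num at this
  obtain ⟨s8, hs8⟩ := collinear_extract h134a hne1
  have hn1 : T134 = T123 + (((1-s8)*s6) • u + s8 • w + (0:ℂ) • z) := by
    rw [hs8, hm, hw']; module
  -- z-coefficient equations
  have en : ((1-s8)*s6 - s9*((1-s2)*(1-s1))) • u + (s8 - s9*((1-s2)*s1)) • w
      + ((0:ℂ) - (s3 + s9*(s2-s3))) • z = 0 := by
    have := hn1.symm.trans hn2
    linear_combination (norm := module) this
  have eH : s3 + s9*(s2-s3) = 0 := by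
    have := (coeff_zero hind en).2.2
    linear_combination -this
  have ex : (t1*(1-s1) - t2*((1-s2)*(1-s1))) • u + (t1*s1 - t2*((1-s2)*s1)) • w
      + ((0:ℂ) - (s3 + t2*(s2-s3))) • z = 0 := by
    have := hx1.symm.trans hx2
    linear_combination (norm := module) this
  have eK : s3 + t2*(s2-s3) = 0 := by
    have := (coeff_zero hind ex).2.2
    linear_combination -this
  -- s2 ≠ s3, hence t2 = s9, hence X = T134
  have hs23 : s2 - s3 ≠ 0 := by
    intro hc
    apply hs3ne
    linear_combination eH - s9 * hc
  have ht2s9 : t2 = s9 := by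
    have hmul : (t2 - s9) * (s2 - s3) = 0 := by linear_combination eK - eH
    rcases mul_eq_zero.mp hmul with h | h
    · exact sub_eq_zero.mp h
    · exact absurd h hs23
  have hXeq : X = T134 := by
    rw [hx2, ht2s9, hn2]
  refine ⟨hXeq, ?_⟩
  -- X ≠ T145
  have hne2 : T145 ≠ X := by
    intro hc
    have h0 : (t1*(1-s1) - 0) • u + (t1*s1 - 1) • w + ((0:ℂ) - 0) • z = 0 := by
      have := hx1.symm.trans (hc.symm.trans hw')
      linear_combination (norm := module) this
    obtain ⟨ea, eb, -⟩ := coeff_zero hind h0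
    have ht1 : t1 = 1 := by linear_combination ea + eb
    have hs1' : s1 = 1 := by linear_combination -ea + (1-s1) * ht1
    exact d11 (by rw [hv, hs1', hw']; module)
  obtain ⟨t4, ht4⟩ := collinear_extract hYb hne2
  have hy2 : Y = T123 + ((t4*((1-s8)*s6)) • u + (1 + t4*(s8-1)) • w + (0:ℂ) • z) := by
    rw [ht4, hXeq, hn1, hw']; module
  have ey : (t3 - t4*((1-s8)*s6)) • u + ((0:ℂ) - (1 + t4*(s8-1))) • w
      + ((0:ℂ) - 0) • z = 0 := by
    have := hy1.symm.trans hy2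
    linear_combination (norm := module) this
  obtain ⟨ea, eb, -⟩ := coeff_zero hind ey
  have ht3 : t3 = s6 := by linear_combination ea + s6 * eb
  rw [hy1, ht3, hm]
end
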